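/- In the complete lattice S_A of soft sets over U with finite domain A (ordered by pointwise reverse inclusion), if X ⊆ S_{f,A} is directed and (F,A) ∈ S_{f,A} satisfies (F,A) ≤ sup X, then there exists (G,A) ∈ X with (F,A) ≤ (G,A). -/

import Mathlib

/-! Encode a soft set `F` by the set `complementGraph F` of pairs `(e, x)` with `x ∉ F e`.
This turns `≤` into inclusion and suprema into unions, and `complementGraph F` is finite when
`F ∈ S_{f,A}` and `A` is finite. The claim is then the compactness of finite sets: a finite set
covered by a directed union of sets lies in one of them. -/

/-- For a fixed parameter set `A`, a soft set with domain `A` over `U` is a map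
`F : A → P(U)`.  The induced order is pointwise reverse inclusion:
`F ≤ G` iff `G e ⊆ F e` for all `e ∈ A`. -/
def sle {U E : Type*} {A : Set E} (F G : ↥A → Set U) : Prop :=
  ∀ e, G e ⊆ F e

/-- Suprema in `S_A` are given by pointwise intersection. -/
def supFun {U E : Type*} {A : Set E} (X : Set (↥A → Set U)) : ↥A → Set U :=
  fun e => ⋂ G ∈ X, G e

section ComplementGraph

variable {U E : Type*} {A : Set E}

def complementGraph (F : ↥A → Set U) : Set (↥A × U) :=
  {p | p.2 ∉ F p.1}

theorem sle_iff_complementGraph_subset {F G : ↥A → Set U} : sle F G ↔ complementGraph F ⊆ complementGraph G :=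
  ⟨fun h p hpF hpG => hpF (h p.1 hpG),
    fun h e x hxG => by_contra fun hxF => h (show (e, x) ∈ complementGraph F from hxF) hxG⟩

theorem complementGraph_supFun (X : Set (↥A → Set U)) : complementGraph (supFun X) = ⋃ G ∈ X, complementGraph G := by
  ext p
  simp [complementGraph, supFun]

theorem complementGraph_finite (hA : A.Finite) {F : ↥A → Set U} (hF : ∀ e, (Set.univ \ F e).Finite) :
    (complementGraph F).Finite := by
  have : Finite ↥A := hA.to_subtype
  refine (Set.finite_univ.prod (Set.finite_iUnion hF)).subset fun p hp => ?_
  exact ⟨trivial, Set.mem_iUnion.2 ⟨p.1, trivial, hp⟩⟩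

end ComplementGraph

theorem compactness_general {U E : Type*} {A : Set E} (hA : A.Finite)
    (X : Set (↥A → Set U))
    (hne : X.Nonempty) (hdir : DirectedOn sle X)
    (F : ↥A → Set U) (hF : ∀ e, (Set.univ \ F e).Finite)
    (hle : sle F (supFun X)) :
    ∃ G ∈ X, sle F G := by
  have hfin := complementGraph_finite hA hF
  have hdir' : DirectedOn (fun G H => complementGraph G ⊆ complementGraph H) X :=
    hdir.mono fun _ _ => sle_iff_complementGraph_subset.1
  have hcover : (hfin.toFinset : Set (↥A × U)) ⊆ ⋃ G ∈ X, complementGraph G := by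
    rw [hfin.coe_toFinset, ← complementGraph_supFun]
    exact sle_iff_complementGraph_subset.1 hle
  obtain ⟨G, hGX, hG⟩ := hdir'.exists_mem_subset_of_finset_subset_biUnion hne hcover
  exact ⟨G, hGX, sle_iff_complementGraph_subset.2 (hfin.coe_toFinset ▸ hG)⟩

theorem compactness {U E : Type*} {A : Set E} (hA : A.Finite)
    (X : Set (↥A → Set U))
    (hXf : ∀ G ∈ X, ∀ e, (Set.univ \ G e).Finite)
    (hne : X.Nonempty) (hdir : DirectedOn sle X)
    (F : ↥A → Set U) (hF : ∀ e, (Set.univ \ F e).Finite)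
    (hle : sle F (supFun X)) :
    ∃ G ∈ X, sle F G :=
  compactness_general hA X hne hdir F hF hle
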